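/- Let A be a self-adjoint operator, α ∈ ℝ, B = A² + 2αA, and η = √(E + α²) with η ≠ 0 and ±η ± α in the resolvent set of A. Then (B − E)⁻¹ = ((A − α)/(2η))·((A² − (η−α)²)⁻¹ − (A² − (η+α)²)⁻¹) + (1/2)·((A² − (η−α)²)⁻¹ + (A² − (η+α)²)⁻¹). -/
import Mathlib

theorem resolvent_identity_via_A_squared
    {H : Type*} [NormedAddCommGroup H] [InnerProductSpace ℂ H] [CompleteSpace H]
    (A : H →L[ℂ] H) (hA : IsSelfAdjoint A) (α : ℝ) (E η : ℂ)
    (hη2 : η ^ 2 = E + (α : ℂ) ^ 2) (hη : η ≠ 0)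
    (h1 : η - (α : ℂ) ∉ spectrum ℂ A) (h2 : -η - (α : ℂ) ∉ spectrum ℂ A)
    (h3 : -η + (α : ℂ) ∉ spectrum ℂ A) (h4 : η + (α : ℂ) ∉ spectrum ℂ A)
    (B : H →L[ℂ] H) (hB : B = A ^ 2 + (2 * (α : ℂ)) • A) :
    Ring.inverse (B - E • (1 : H →L[ℂ] H)) =
      (2 * η)⁻¹ • ((A - (α : ℂ) • (1 : H →L[ℂ] H)) *
        (Ring.inverse (A ^ 2 - ((η - (α : ℂ)) ^ 2) • (1 : H →L[ℂ] H)) -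
         Ring.inverse (A ^ 2 - ((η + (α : ℂ)) ^ 2) • (1 : H →L[ℂ] H)))) +
      (2 : ℂ)⁻¹ • (Ring.inverse (A ^ 2 - ((η - (α : ℂ)) ^ 2) • (1 : H →L[ℂ] H)) +
        Ring.inverse (A ^ 2 - ((η + (α : ℂ)) ^ 2) • (1 : H →L[ℂ] H))) := by
  have hE : E = η ^ 2 - (α : ℂ) ^ 2 := by rw [hη2]; ring
  subst hB hE
  -- units from resolvent-set assumptions
  have key : ∀ z : ℂ, z ∉ spectrum ℂ A → IsUnit (A - z • (1 : H →L[ℂ] H)) := by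
    intro z hz
    rw [spectrum.notMem_iff] at hz
    rw [Algebra.algebraMap_eq_smul_one] at hz
    have : A - z • (1 : H →L[ℂ] H) = -(z • 1 - A) := by rw [neg_sub]
    rw [this]; exact hz.neg
  set u : H →L[ℂ] H := A - (η - (α : ℂ)) • 1 with hu_def
  set w : H →L[ℂ] H := A + (η - (α : ℂ)) • 1 with hw_def
  set x : H →L[ℂ] H := A - (η + (α : ℂ)) • 1 with hx_def
  set v : H →L[ℂ] H := A + (η + (α : ℂ)) • 1 with hv_def
  have hu : IsUnit u := key _ h1
  have hx : IsUnit x := key _ h4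
  have hw : IsUnit w := by
    have := key _ h3
    have e : A - (-η + (α : ℂ)) • (1 : H →L[ℂ] H) = w := by
      rw [hw_def]; rw [show (-η + (α:ℂ)) = -(η - α) by ring, neg_smul, sub_neg_eq_add]
    rwa [e] at this
  have hv : IsUnit v := by
    have := key _ h2
    have e : A - (-η - (α : ℂ)) • (1 : H →L[ℂ] H) = v := by
      rw [hv_def]; rw [show (-η - (α:ℂ)) = -(η + α) by ring, neg_smul, sub_neg_eq_add]
    rwa [e] at this
  -- factorizations
  have hbe : A ^ 2 + (2 * (α : ℂ)) • A - (η ^ 2 - (α : ℂ) ^ 2) • (1 : H →L[ℂ] H) = u * v := by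
    rw [hu_def, hv_def]
    simp only [mul_add, add_mul, sub_mul, mul_sub, smul_mul_assoc, mul_smul_comm, smul_smul,
      mul_one, one_mul, sq]
    module
  have hd₁ : A ^ 2 - ((η - (α : ℂ)) ^ 2) • (1 : H →L[ℂ] H) = u * w := by
    rw [hu_def, hw_def]
    simp only [mul_add, add_mul, sub_mul, mul_sub, smul_mul_assoc, mul_smul_comm, smul_smul,
      mul_one, one_mul, sq]
    module
  have hd₂ : A ^ 2 - ((η + (α : ℂ)) ^ 2) • (1 : H →L[ℂ] H) = x * v := by
    rw [hx_def, hv_def]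
    simp only [mul_add, add_mul, sub_mul, mul_sub, smul_mul_assoc, mul_smul_comm, smul_smul,
      mul_one, one_mul, sq]
    module
  have hbeU : IsUnit (A ^ 2 + (2 * (α : ℂ)) • A - (η ^ 2 - (α : ℂ) ^ 2) • (1 : H →L[ℂ] H)) :=
    hbe ▸ hu.mul hv
  have hD₁ : IsUnit (A ^ 2 - ((η - (α : ℂ)) ^ 2) • (1 : H →L[ℂ] H)) := hd₁ ▸ hu.mul hw
  have hD₂ : IsUnit (A ^ 2 - ((η + (α : ℂ)) ^ 2) • (1 : H →L[ℂ] H)) := hd₂ ▸ hx.mul hv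
  -- cancel by multiplying on the right by m = u*v*w*x
  set m : H →L[ℂ] H := u * v * (w * x) with hm_def
  have hm : IsUnit m := (hu.mul hv).mul (hw.mul hx)
  refine hm.mul_right_cancel ?_
  -- commuting rearrangements of m
  have comm : ∀ c d : ℂ, (A + c • (1 : H →L[ℂ] H)) * (A + d • 1) = (A + d • 1) * (A + c • 1) := by
    intro c d
    simp only [mul_add, add_mul, smul_mul_assoc, mul_smul_comm, smul_smul, mul_one, one_mul]
    module
  have comm' : ∀ (a b : H →L[ℂ] H), (∃ c : ℂ, a = A + c • 1) → (∃ c : ℂ, b = A + c • 1) →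
      a * b = b * a := by
    rintro _ _ ⟨c, rfl⟩ ⟨d, rfl⟩; exact comm c d
  have repr_u : ∃ c : ℂ, u = A + c • (1 : H →L[ℂ] H) :=
    ⟨-(η - α), by rw [hu_def, neg_smul, sub_eq_add_neg]⟩
  have repr_w : ∃ c : ℂ, w = A + c • (1 : H →L[ℂ] H) := ⟨η - α, hw_def⟩
  have repr_x : ∃ c : ℂ, x = A + c • (1 : H →L[ℂ] H) :=
    ⟨-(η + α), by rw [hx_def, neg_smul, sub_eq_add_neg]⟩
  have repr_v : ∃ c : ℂ, v = A + c • (1 : H →L[ℂ] H) := ⟨η + α, hv_def⟩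
  have hm₁ : m = (u * w) * (x * v) := by
    rw [hm_def, mul_assoc, ← mul_assoc v w x, comm' v w repr_v repr_w,
      mul_assoc w v x, comm' v x repr_v repr_x, ← mul_assoc, ← mul_assoc]
  have hm₂ : m = (x * v) * (u * w) := by
    have cX : Commute (u * w) x :=
      Commute.mul_left (comm' u x repr_u repr_x) (comm' w x repr_w repr_x)
    have cV : Commute (u * w) v :=
      Commute.mul_left (comm' u v repr_u repr_v) (comm' w v repr_w repr_v)
    exact hm₁.trans (cX.mul_right cV).eq
  have h2η : (2 * η : ℂ) ≠ 0 := mul_ne_zero two_ne_zero hη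
  have LHS : Ring.inverse (A ^ 2 + (2 * (α : ℂ)) • A - (η ^ 2 - (α : ℂ) ^ 2) • (1 : H →L[ℂ] H))
      * m = w * x := by
    rw [hm_def, ← hbe, ← mul_assoc, Ring.inverse_mul_cancel _ hbeU, one_mul]
  have r1 : Ring.inverse (A ^ 2 - ((η - (α : ℂ)) ^ 2) • (1 : H →L[ℂ] H)) * m = x * v := by
    rw [hm₁, ← hd₁, ← mul_assoc, Ring.inverse_mul_cancel _ hD₁, one_mul]
  have r2 : Ring.inverse (A ^ 2 - ((η + (α : ℂ)) ^ 2) • (1 : H →L[ℂ] H)) * m = u * w := by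
    rw [hm₂, ← hd₂, ← mul_assoc, Ring.inverse_mul_cancel _ hD₂, one_mul]
  have r12 : (Ring.inverse (A ^ 2 - ((η - (α : ℂ)) ^ 2) • (1 : H →L[ℂ] H)) -
      Ring.inverse (A ^ 2 - ((η + (α : ℂ)) ^ 2) • (1 : H →L[ℂ] H))) * m = x * v - u * w := by
    rw [sub_mul, r1, r2]
  have radd : (Ring.inverse (A ^ 2 - ((η - (α : ℂ)) ^ 2) • (1 : H →L[ℂ] H)) +
      Ring.inverse (A ^ 2 - ((η + (α : ℂ)) ^ 2) • (1 : H →L[ℂ] H))) * m = x * v + u * w := by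
    rw [add_mul, r1, r2]
  rw [add_mul, smul_mul_assoc, smul_mul_assoc, mul_assoc, r12, radd, LHS]
  have key2 : (A - (α : ℂ) • (1 : H →L[ℂ] H)) * (x * v - u * w) + η • (x * v + u * w)
      = (2 * η) • (w * x) := by
    rw [hu_def, hv_def, hw_def, hx_def]
    simp only [mul_add, add_mul, sub_mul, mul_sub, smul_mul_assoc, mul_smul_comm, smul_smul,
      mul_one, one_mul, smul_add, smul_sub, sq]
    module
  have e2 : ((2 : ℂ))⁻¹ • (x * v + u * w) = (2 * η)⁻¹ • (η • (x * v + u * w)) := by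
    rw [smul_smul]; congr 1; field_simp
  rw [e2, ← smul_add, key2, inv_smul_smul₀ h2η]
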